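/- The ideal L = (g₁, g₃) of O = ℤ[ξ, λ], with g₁ = −1 − ξ + λ − 2λξ and g₃ = −2 + ξ + 2λ + 2λξ, is not a principal ideal of O. -/

import Mathlib

noncomputable def xi : ℂ := (1 + Complex.I * (Real.sqrt 3 : ℂ)) / 2
noncomputable def lam : ℂ := 4 + (Real.sqrt 15 : ℂ)
noncomputable def OA : Subalgebra ℤ ℂ := Algebra.adjoin ℤ ({xi, lam} : Set ℂ)
noncomputable def g1 : ℂ := -1 - xi + lam - 2 * (lam * xi)
noncomputable def g3 : ℂ := -2 + xi + 2 * lam + 2 * (lam * xi)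

section Aux

lemma h3c : ((Real.sqrt 3 : ℝ) : ℂ)^2 = 3 := by
  rw [← Complex.ofReal_pow, Real.sq_sqrt (by norm_num : (3:ℝ) ≥ 0)]; norm_num

lemma h15c : ((Real.sqrt 15 : ℝ) : ℂ)^2 = 15 := by
  rw [← Complex.ofReal_pow, Real.sq_sqrt (by norm_num : (15:ℝ) ≥ 0)]; norm_num

lemma hxi2 : xi^2 = xi - 1 := by
  unfold xi
  linear_combination (((Real.sqrt 3 : ℝ):ℂ)^2/4) * Complex.I_sq - (1/4) * h3c

lemma hlam2 : lam^2 = 8*lam - 1 := by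
  unfold lam; linear_combination h15c

noncomputable def f (p q r s : ℤ) : ℂ := p + q * xi + r * lam + s * (lam * xi)

lemma f_mul (p q r s P Q R S : ℤ) : f p q r s * f P Q R S =
    f (p*P - q*Q - r*R + s*S)
      (p*Q + q*P + q*Q - r*S - s*R - s*S)
      (p*R + r*P - q*S - s*Q + 8*r*R - 8*s*S)
      (p*S + s*P + q*R + r*Q + q*S + s*Q + 8*r*S + 8*s*R + 8*s*S) := by
  unfold f
  push_cast
  linear_combination ((q:ℂ)*Q + ((q:ℂ)*S + (s:ℂ)*Q)*lam + (s:ℂ)*S*lam^2) * hxi2 +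
    ((r:ℂ)*R - (s:ℂ)*S + ((s:ℂ)*S + (s:ℂ)*R + (r:ℂ)*S)*xi) * hlam2

lemma f_add (p q r s P Q R S : ℤ) :
    f p q r s + f P Q R S = f (p+P) (q+Q) (r+R) (s+S) := by
  unfold f; push_cast; ring

lemma irr15 : Irrational (Real.sqrt 15) := by
  rw [show ((15:ℝ)) = ((15:ℕ):ℝ) by norm_num, irrational_sqrt_natCast_iff]
  rintro ⟨k, hk⟩
  have h4 : k < 4 := by nlinarith
  interval_cases k <;> omega

lemma key15 (A B : ℤ) (h : (A:ℝ) + B * Real.sqrt 15 = 0) : A = 0 ∧ B = 0 := by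
  by_cases hB : B = 0
  · subst hB
    have : (A:ℝ) = 0 := by simpa using h
    exact ⟨by exact_mod_cast this, rfl⟩
  · exfalso
    have hBr : (B:ℝ) ≠ 0 := Int.cast_ne_zero.mpr hB
    have hs : Real.sqrt 15 = (-A : ℝ)/B := by field_simp; linarith
    exact irr15 ⟨(-A : ℚ)/(B : ℚ), by push_cast; rw [hs]⟩

lemma f_eq_zero {p q r s : ℤ} (h : f p q r s = 0) : p = 0 ∧ q = 0 ∧ r = 0 ∧ s = 0 := by
  have h2 : Complex.ofReal ((2*p + q + 8*r + 4*s : ℤ) + ((2*r + s : ℤ)) * Real.sqrt 15)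
      + Complex.I * Complex.ofReal (Real.sqrt 3 * (((q + 4*s : ℤ)) + (s:ℝ) * Real.sqrt 15)) = 0 := by
    rw [show (0:ℂ) = 2 * f p q r s by rw [h]; ring]
    unfold f xi lam
    push_cast
    ring
  have hre : ((2*p + q + 8*r + 4*s : ℤ):ℝ) + ((2*r + s : ℤ):ℝ) * Real.sqrt 15 = 0 := by
    simpa using congrArg Complex.re h2
  have him : Real.sqrt 3 * (((q + 4*s : ℤ):ℝ) + (s:ℝ) * Real.sqrt 15) = 0 := by
    simpa using congrArg Complex.im h2
  have h3ne : Real.sqrt 3 ≠ 0 := by positivity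
  have him' : ((q + 4*s : ℤ):ℝ) + ((s:ℤ):ℝ) * Real.sqrt 15 = 0 := by
    rcases mul_eq_zero.mp him with h' | h'
    · exact absurd h' h3ne
    · exact_mod_cast h'
  obtain ⟨hqs, hs⟩ := key15 _ _ him'
  obtain ⟨hpr, hr⟩ := key15 _ _ hre
  exact ⟨by omega, by omega, by omega, by omega⟩

lemma f_inj {p q r s P Q R S : ℤ} (h : f p q r s = f P Q R S) :
    p = P ∧ q = Q ∧ r = R ∧ s = S := by
  have h0 : f (p - P) (q - Q) (r - R) (s - S) = 0 := by
    unfold f at h ⊢; push_cast; linear_combination h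
  obtain ⟨h1, h2, h3, h4⟩ := f_eq_zero h0
  exact ⟨by omega, by omega, by omega, by omega⟩

noncomputable def Scoords : Subalgebra ℤ ℂ where
  carrier := {z | ∃ p q r s : ℤ, z = f p q r s}
  mul_mem' := by
    rintro x y ⟨p, q, r, s, rfl⟩ ⟨P, Q, R, S, rfl⟩
    exact ⟨_, _, _, _, f_mul p q r s P Q R S⟩
  one_mem' := ⟨1, 0, 0, 0, by unfold f; push_cast; ring⟩
  add_mem' := by
    rintro x y ⟨p, q, r, s, rfl⟩ ⟨P, Q, R, S, rfl⟩
    exact ⟨p+P, q+Q, r+R, s+S, f_add p q r s P Q R S⟩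
  zero_mem' := ⟨0, 0, 0, 0, by unfold f; push_cast; ring⟩
  algebraMap_mem' := fun n => ⟨n, 0, 0, 0, by unfold f; push_cast; simp⟩

lemma OA_le : OA ≤ Scoords := by
  apply Algebra.adjoin_le
  rintro z (rfl | rfl)
  · exact ⟨0, 1, 0, 0, by unfold f; push_cast; ring⟩
  · exact ⟨0, 0, 1, 0, by unfold f; push_cast; ring⟩

lemma hg1f : g1 = f (-1) (-1) 1 (-2) := by unfold g1 f; push_cast; ring
lemma hg3f : g3 = f (-2) 1 2 2 := by unfold g3 f; push_cast; ring

def l : ZMod 3 → ZMod 9 := fun t => (t.val : ZMod 9)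

lemma glueA (z : ℤ) : ((z % 3 : ℤ) : ZMod 9) = l ((z : ℤ) : ZMod 3) := by
  have h := ZMod.val_intCast (n := 3) z
  push_cast at h
  unfold l
  rw [← h]
  push_cast
  ring

lemma glueC (z : ℤ) : ((z % 3 : ℤ) : ZMod 3) = ((z : ℤ) : ZMod 3) := by
  rw [ZMod.intCast_eq_intCast_iff]
  exact Int.emod_emod_of_dvd z dvd_rfl

lemma glueB (z : ℤ) : (3 : ZMod 9) * ((z : ℤ) : ZMod 9) = 3 * l ((z : ℤ) : ZMod 3) := by
  have h1 : (3*z : ℤ) = 9*(z/3) + 3*(z%3) := by omega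
  have h2 : ((3*z : ℤ) : ZMod 9) = (3 : ZMod 9) * ((z : ℤ) : ZMod 9) := by push_cast; ring
  rw [← h2, h1]
  push_cast
  rw [show (9 : ZMod 9) = 0 by decide, zero_mul, zero_add, glueA]

lemma red9 (A Z W G : ℤ) (h : A + 3*Z + 9*W = G) :
    ((A : ℤ) : ZMod 9) + 3 * l ((Z : ℤ) : ZMod 3) = ((G : ℤ) : ZMod 9) := by
  have h9 := congrArg (fun z : ℤ => ((z : ℤ) : ZMod 9)) h
  push_cast at h9
  rw [show (9 : ZMod 9) = 0 by decide, zero_mul, add_zero, glueB] at h9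
  exact h9


set_option maxRecDepth 100000 in
set_option synthInstance.maxSize 4000 in
set_option synthInstance.maxHeartbeats 1000000 in
set_option maxHeartbeats 10000000 in
lemma D1 : ∀ a0 a1 a2 a3 u0 u1 u2 u3 : ZMod 3,
    u0*a0 - u1*a1 - u2*a2 + u3*a3 = -1 →
    u0*a1 + u1*a0 + u1*a1 - u2*a3 - u3*a2 - u3*a3 = -1 →
    u0*a2 + u2*a0 - u1*a3 - u3*a1 + 8*u2*a2 - 8*u3*a3 = 1 →
    u0*a3 + u3*a0 + u1*a2 + u2*a1 + u1*a3 + u3*a1 + 8*u2*a3 + 8*u3*a2 + 8*u3*a3 = -2 →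
    -a0 + a1 = 0 → a1 + a2 = 0 → -a0 - 2*a1 - a2 + a3 = 0 →
    ((a0 = 2 ∧ a1 = 2 ∧ a2 = 1 ∧ a3 = 1) ∨ (a0 = 1 ∧ a1 = 1 ∧ a2 = 2 ∧ a3 = 2)) := by
  decide


set_option maxRecDepth 100000 in
lemma DWp : ∀ C0 C1 C2 C3 : ZMod 3, ∃ t : ZMod 3,
    C0*2 - C1*2 - C2 + C3 = t*2 ∧ C0*2 + C1*2 + C1*2 - C2 - C3 - C3 = t*2 ∧ C0 + C2*2 - C1 - C3*2 + 8*C2 - 8*C3 = t ∧ C0 + C3*2 + C1 + C2*2 + C1 + C3*2 + 8*C2 + 8*C3 + 8*C3 = t := by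
  decide


set_option maxRecDepth 1000000 in
set_option synthInstance.maxSize 4000 in
set_option synthInstance.maxHeartbeats 1000000 in
set_option maxHeartbeats 16000000 in
lemma DAp : ∀ B0 B1 B2 B3 : ZMod 3,
    (((-6 : ℤ) : ZMod 9) + 3 * l (-B0 - 2*B1 - B2 + B3) = ((0 : ℤ) : ZMod 9)) →
    ∀ U0 U1 U2 U3 t : ZMod 3,
    (l U0*2 - l U1*2 - l U2 + l U3 + 3 * l (t*2 + (U0*B0 - U1*B1 - U2*B2 + U3*B3)) = -1) →
    (l U0*2 + l U1*2 + l U1*2 - l U2 - l U3 - l U3 + 3 * l (t*2 + (U0*B1 + U1*B0 + U1*B1 - U2*B3 - U3*B2 - U3*B3)) = -1) →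
    (l U0 + l U2*2 - l U1 - l U3*2 + 8*l U2 - 8*l U3 + 3 * l (t + (U0*B2 + U2*B0 - U1*B3 - U3*B1 + 8*U2*B2 - 8*U3*B3)) = 1) →
    (l U0 + l U3*2 + l U1 + l U2*2 + l U1 + l U3*2 + 8*l U2 + 8*l U3 + 8*l U3 + 3 * l (t + (U0*B3 + U3*B0 + U1*B2 + U2*B1 + U1*B3 + U3*B1 + 8*U2*B3 + 8*U3*B2 + 8*U3*B3)) = -2) →
    ((B0 = 0 ∧ B1 = 0 ∧ B2 = 2 ∧ B3 = 1) ∨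
     (B0 = 0 ∧ B1 = 1 ∧ B2 = 1 ∧ B3 = 2) ∨
     (B0 = 0 ∧ B1 = 2 ∧ B2 = 0 ∧ B3 = 0) ∨
     (B0 = 1 ∧ B1 = 0 ∧ B2 = 2 ∧ B3 = 2) ∨
     (B0 = 1 ∧ B1 = 1 ∧ B2 = 1 ∧ B3 = 0) ∨
     (B0 = 1 ∧ B1 = 2 ∧ B2 = 0 ∧ B3 = 1) ∨
     (B0 = 2 ∧ B1 = 0 ∧ B2 = 2 ∧ B3 = 0) ∨
     (B0 = 2 ∧ B1 = 1 ∧ B2 = 1 ∧ B3 = 1) ∨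
     (B0 = 2 ∧ B1 = 2 ∧ B2 = 0 ∧ B3 = 2)) := by
  decide


set_option maxRecDepth 1000000 in
set_option synthInstance.maxSize 4000 in
set_option synthInstance.maxHeartbeats 1000000 in
set_option maxHeartbeats 16000000 in
lemma DBp : ∀ B0 B1 B2 B3 : ZMod 3,
    ((B0 = 0 ∧ B1 = 0 ∧ B2 = 2 ∧ B3 = 1) ∨
     (B0 = 0 ∧ B1 = 1 ∧ B2 = 1 ∧ B3 = 2) ∨
     (B0 = 0 ∧ B1 = 2 ∧ B2 = 0 ∧ B3 = 0) ∨
     (B0 = 1 ∧ B1 = 0 ∧ B2 = 2 ∧ B3 = 2) ∨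
     (B0 = 1 ∧ B1 = 1 ∧ B2 = 1 ∧ B3 = 0) ∨
     (B0 = 1 ∧ B1 = 2 ∧ B2 = 0 ∧ B3 = 1) ∨
     (B0 = 2 ∧ B1 = 0 ∧ B2 = 2 ∧ B3 = 0) ∨
     (B0 = 2 ∧ B1 = 1 ∧ B2 = 1 ∧ B3 = 1) ∨
     (B0 = 2 ∧ B1 = 2 ∧ B2 = 0 ∧ B3 = 2)) →
    ∀ U0 U1 U2 U3 t : ZMod 3,
    (l U0*2 - l U1*2 - l U2 + l U3 + 3 * l (t*2 + (U0*B0 - U1*B1 - U2*B2 + U3*B3)) = -2) →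
    (l U0*2 + l U1*2 + l U1*2 - l U2 - l U3 - l U3 + 3 * l (t*2 + (U0*B1 + U1*B0 + U1*B1 - U2*B3 - U3*B2 - U3*B3)) = 1) →
    (l U0 + l U2*2 - l U1 - l U3*2 + 8*l U2 - 8*l U3 + 3 * l (t + (U0*B2 + U2*B0 - U1*B3 - U3*B1 + 8*U2*B2 - 8*U3*B3)) = 2) →
    ¬ (l U0 + l U3*2 + l U1 + l U2*2 + l U1 + l U3*2 + 8*l U2 + 8*l U3 + 8*l U3 + 3 * l (t + (U0*B3 + U3*B0 + U1*B2 + U2*B1 + U1*B3 + U3*B1 + 8*U2*B3 + 8*U3*B2 + 8*U3*B3)) = 2) := by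
  decide


set_option maxRecDepth 100000 in
lemma DWm : ∀ C0 C1 C2 C3 : ZMod 3, ∃ t : ZMod 3,
    C0 - C1 - C2*2 + C3*2 = t ∧ C0 + C1 + C1 - C2*2 - C3*2 - C3*2 = t ∧ C0*2 + C2 - C1*2 - C3 + 16*C2 - 16*C3 = t*2 ∧ C0*2 + C3 + C1*2 + C2 + C1*2 + C3 + 16*C2 + 16*C3 + 16*C3 = t*2 := by
  decide


set_option maxRecDepth 1000000 in
set_option synthInstance.maxSize 4000 in
set_option synthInstance.maxHeartbeats 1000000 in
set_option maxHeartbeats 16000000 in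
lemma DAm : ∀ B0 B1 B2 B3 : ZMod 3,
    (((-3 : ℤ) : ZMod 9) + 3 * l (-B0 - 2*B1 - B2 + B3) = ((0 : ℤ) : ZMod 9)) →
    ∀ U0 U1 U2 U3 t : ZMod 3,
    (l U0 - l U1 - l U2*2 + l U3*2 + 3 * l (t + (U0*B0 - U1*B1 - U2*B2 + U3*B3)) = -1) →
    (l U0 + l U1 + l U1 - l U2*2 - l U3*2 - l U3*2 + 3 * l (t + (U0*B1 + U1*B0 + U1*B1 - U2*B3 - U3*B2 - U3*B3)) = -1) →
    (l U0*2 + l U2 - l U1*2 - l U3 + 16*l U2 - 16*l U3 + 3 * l (t*2 + (U0*B2 + U2*B0 - U1*B3 - U3*B1 + 8*U2*B2 - 8*U3*B3)) = 1) →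
    (l U0*2 + l U3 + l U1*2 + l U2 + l U1*2 + l U3 + 16*l U2 + 16*l U3 + 16*l U3 + 3 * l (t*2 + (U0*B3 + U3*B0 + U1*B2 + U2*B1 + U1*B3 + U3*B1 + 8*U2*B3 + 8*U3*B2 + 8*U3*B3)) = -2) →
    ((B0 = 0 ∧ B1 = 0 ∧ B2 = 2 ∧ B3 = 0) ∨
     (B0 = 0 ∧ B1 = 1 ∧ B2 = 1 ∧ B3 = 1) ∨
     (B0 = 0 ∧ B1 = 2 ∧ B2 = 0 ∧ B3 = 2) ∨
     (B0 = 1 ∧ B1 = 0 ∧ B2 = 2 ∧ B3 = 1) ∨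
     (B0 = 1 ∧ B1 = 1 ∧ B2 = 1 ∧ B3 = 2) ∨
     (B0 = 1 ∧ B1 = 2 ∧ B2 = 0 ∧ B3 = 0) ∨
     (B0 = 2 ∧ B1 = 0 ∧ B2 = 2 ∧ B3 = 2) ∨
     (B0 = 2 ∧ B1 = 1 ∧ B2 = 1 ∧ B3 = 0) ∨
     (B0 = 2 ∧ B1 = 2 ∧ B2 = 0 ∧ B3 = 1)) := by
  decide


set_option maxRecDepth 1000000 in
set_option synthInstance.maxSize 4000 in
set_option synthInstance.maxHeartbeats 1000000 in
set_option maxHeartbeats 16000000 in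
lemma DBm : ∀ B0 B1 B2 B3 : ZMod 3,
    ((B0 = 0 ∧ B1 = 0 ∧ B2 = 2 ∧ B3 = 0) ∨
     (B0 = 0 ∧ B1 = 1 ∧ B2 = 1 ∧ B3 = 1) ∨
     (B0 = 0 ∧ B1 = 2 ∧ B2 = 0 ∧ B3 = 2) ∨
     (B0 = 1 ∧ B1 = 0 ∧ B2 = 2 ∧ B3 = 1) ∨
     (B0 = 1 ∧ B1 = 1 ∧ B2 = 1 ∧ B3 = 2) ∨
     (B0 = 1 ∧ B1 = 2 ∧ B2 = 0 ∧ B3 = 0) ∨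
     (B0 = 2 ∧ B1 = 0 ∧ B2 = 2 ∧ B3 = 2) ∨
     (B0 = 2 ∧ B1 = 1 ∧ B2 = 1 ∧ B3 = 0) ∨
     (B0 = 2 ∧ B1 = 2 ∧ B2 = 0 ∧ B3 = 1)) →
    ∀ U0 U1 U2 U3 t : ZMod 3,
    (l U0 - l U1 - l U2*2 + l U3*2 + 3 * l (t + (U0*B0 - U1*B1 - U2*B2 + U3*B3)) = -2) →
    (l U0 + l U1 + l U1 - l U2*2 - l U3*2 - l U3*2 + 3 * l (t + (U0*B1 + U1*B0 + U1*B1 - U2*B3 - U3*B2 - U3*B3)) = 1) →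
    (l U0*2 + l U2 - l U1*2 - l U3 + 16*l U2 - 16*l U3 + 3 * l (t*2 + (U0*B2 + U2*B0 - U1*B3 - U3*B1 + 8*U2*B2 - 8*U3*B3)) = 2) →
    ¬ (l U0*2 + l U3 + l U1*2 + l U2 + l U1*2 + l U3 + 16*l U2 + 16*l U3 + 16*l U3 + 3 * l (t*2 + (U0*B3 + U3*B0 + U1*B2 + U2*B1 + U1*B3 + U3*B1 + 8*U2*B3 + 8*U3*B2 + 8*U3*B3)) = 2) := by
  decide


end Aux

set_option maxHeartbeats 1000000 in
/-- The O-ideal L = (g₁, g₃) of O = ℤ[ξ, λ] is not principal. -/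
theorem L_not_principal :
    ¬ ∃ a : ℂ, Submodule.span OA ({g1, g3} : Set ℂ) =
      Submodule.span OA ({a} : Set ℂ) := by
  rintro ⟨a, hspan⟩
  have hg1m : g1 ∈ Submodule.span OA ({a} : Set ℂ) := by
    rw [← hspan]; exact Submodule.subset_span (by simp)
  have hg3m : g3 ∈ Submodule.span OA ({a} : Set ℂ) := by
    rw [← hspan]; exact Submodule.subset_span (by simp)
  obtain ⟨u, hu⟩ := Submodule.mem_span_singleton.mp hg1m
  obtain ⟨v, hv⟩ := Submodule.mem_span_singleton.mp hg3m
  have ham : a ∈ Submodule.span OA ({g1, g3} : Set ℂ) := by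
    rw [hspan]; exact Submodule.mem_span_singleton_self a
  obtain ⟨x, y, hxy⟩ := Submodule.mem_span_pair.mp ham
  have hu' : (u : ℂ) * a = g1 := by rw [← hu]; rfl
  have hv' : (v : ℂ) * a = g3 := by rw [← hv]; rfl
  have hxy' : (x : ℂ) * g1 + (y : ℂ) * g3 = a := by rw [← hxy]; rfl
  have hxiOA : xi ∈ OA := Algebra.subset_adjoin (by simp)
  have hlamOA : lam ∈ OA := Algebra.subset_adjoin (by simp)
  have hg1OA : g1 ∈ OA := by
    have hh : g1 = -1 - xi + lam - 2 * (lam * xi) := rfl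
    rw [hh]
    exact sub_mem (add_mem (sub_mem (neg_mem (one_mem _)) hxiOA) hlamOA)
      (mul_mem (by exact_mod_cast OA.intCast_mem 2) (mul_mem hlamOA hxiOA))
  have hg3OA : g3 ∈ OA := by
    have hh : g3 = -2 + xi + 2 * lam + 2 * (lam * xi) := rfl
    rw [hh]
    exact add_mem (add_mem (add_mem (by exact_mod_cast OA.intCast_mem (-2)) hxiOA)
      (mul_mem (by exact_mod_cast OA.intCast_mem 2) hlamOA))
      (mul_mem (by exact_mod_cast OA.intCast_mem 2) (mul_mem hlamOA hxiOA))
  have haOA : a ∈ OA := by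
    rw [← hxy']
    exact add_mem (mul_mem x.2 hg1OA) (mul_mem y.2 hg3OA)
  obtain ⟨a0, a1, a2, a3, hac⟩ := OA_le haOA
  obtain ⟨u0, u1, u2, u3, huc⟩ := OA_le u.2
  obtain ⟨v0, v1, v2, v3, hvc⟩ := OA_le v.2
  obtain ⟨x0, x1, x2, x3, hxc⟩ := OA_le x.2
  obtain ⟨y0, y1, y2, y3, hyc⟩ := OA_le y.2
  have hu9 : f u0 u1 u2 u3 * f a0 a1 a2 a3 = f (-1) (-1) 1 (-2) := by
    rw [← huc, ← hac, hu', hg1f]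
  have hv9 : f v0 v1 v2 v3 * f a0 a1 a2 a3 = f (-2) 1 2 2 := by
    rw [← hvc, ← hac, hv', hg3f]
  have hxyf : f x0 x1 x2 x3 * f (-1) (-1) 1 (-2) + f y0 y1 y2 y3 * f (-2) 1 2 2
      = f a0 a1 a2 a3 := by
    rw [← hxc, ← hyc, ← hg1f, ← hg3f, ← hac, hxy']
  rw [f_mul] at hu9 hv9
  rw [f_mul, f_mul, f_add] at hxyf
  obtain ⟨hM0u, hM1u, hM2u, hM3u⟩ := f_inj hu9
  obtain ⟨hM0v, hM1v, hM2v, hM3v⟩ := f_inj hv9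
  obtain ⟨hA0, hA1, hA2, hA3⟩ := f_inj hxyf
  have hps1 : -a0 + a1 = 3*(-x1 + x2 + x3 + y0 - 2*y3) := by rw [← hA0, ← hA1]; ring
  have hps2 : a1 + a2 = 3*(3*x2 + 6*x3 + y0 - y1 + 4*y2 - 7*y3) := by rw [← hA1, ← hA2]; ring
  have hps3 : -a0 - 2*a1 - a2 + a3 = 9*(-3*x2 - 3*x3 + y1 + y2 + 6*y3) := by
    rw [← hA0, ← hA1, ← hA2, ← hA3]; ring
  -- mod 3 facts
  have c0 := congrArg (fun z : ℤ => ((z : ℤ) : ZMod 3)) hM0u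
  have c1 := congrArg (fun z : ℤ => ((z : ℤ) : ZMod 3)) hM1u
  have c2 := congrArg (fun z : ℤ => ((z : ℤ) : ZMod 3)) hM2u
  have c3 := congrArg (fun z : ℤ => ((z : ℤ) : ZMod 3)) hM3u
  push_cast at c0 c1 c2 c3
  have q1 := congrArg (fun z : ℤ => ((z : ℤ) : ZMod 3)) hps1
  have q2 := congrArg (fun z : ℤ => ((z : ℤ) : ZMod 3)) hps2
  have q3 := congrArg (fun z : ℤ => ((z : ℤ) : ZMod 3)) hps3
  push_cast at q1 q2 q3
  rw [show (3 : ZMod 3) = 0 by decide, zero_mul] at q1 q2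
  rw [show (9 : ZMod 3) = 0 by decide, zero_mul] at q3
  have hcases := D1 _ _ _ _ _ _ _ _ c0 c1 c2 c3 q1 q2 q3

  rcases hcases with ⟨he0, he1, he2, he3⟩ | ⟨he0, he1, he2, he3⟩
  ·

    have hd0 : (3:ℤ) ∣ a0 - 2 := by
      apply (ZMod.intCast_zmod_eq_zero_iff_dvd _ 3).mp
      push_cast
      rw [he0]
      decide
    obtain ⟨b0, hb0⟩ := hd0
    have ha0' : a0 = 2 + 3*b0 := by omega
    have hd1 : (3:ℤ) ∣ a1 - 2 := by
      apply (ZMod.intCast_zmod_eq_zero_iff_dvd _ 3).mp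
      push_cast
      rw [he1]
      decide
    obtain ⟨b1, hb1⟩ := hd1
    have ha1' : a1 = 2 + 3*b1 := by omega
    have hd2 : (3:ℤ) ∣ a2 - 1 := by
      apply (ZMod.intCast_zmod_eq_zero_iff_dvd _ 3).mp
      push_cast
      rw [he2]
      decide
    obtain ⟨b2, hb2⟩ := hd2
    have ha2' : a2 = 1 + 3*b2 := by omega
    have hd3 : (3:ℤ) ∣ a3 - 1 := by
      apply (ZMod.intCast_zmod_eq_zero_iff_dvd _ 3).mp
      push_cast
      rw [he3]
      decide
    obtain ⟨b3, hb3⟩ := hd3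
    have ha3' : a3 = 1 + 3*b3 := by omega
    rw [ha0', ha1', ha2', ha3'] at hM0u hM1u hM2u hM3u hM0v hM1v hM2v hM3v hps3
    have hu0d : u0 = 3*(u0/3) + u0%3 := by omega
    have hu1d : u1 = 3*(u1/3) + u1%3 := by omega
    have hu2d : u2 = 3*(u2/3) + u2%3 := by omega
    have hu3d : u3 = 3*(u3/3) + u3%3 := by omega
    rw [hu0d, hu1d, hu2d, hu3d] at hM0u hM1u hM2u hM3u
    have hv0d : v0 = 3*(v0/3) + v0%3 := by omega
    have hv1d : v1 = 3*(v1/3) + v1%3 := by omega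
    have hv2d : v2 = 3*(v2/3) + v2%3 := by omega
    have hv3d : v3 = 3*(v3/3) + v3%3 := by omega
    rw [hv0d, hv1d, hv2d, hv3d] at hM0v hM1v hM2v hM3v
    have hNps : (-6 : ℤ) + 3*(-b0 - 2*b1 - b2 + b3) + 9*(-(-3*x2 - 3*x3 + y1 + y2 + 6*y3)) = 0 := by
      linear_combination hps3
    have hkps := red9 _ _ _ _ hNps
    push_cast at hkps
    have hN0u : ((u0%3)*2 - (u1%3)*2 - (u2%3) + (u3%3)) + 3*(((u0/3)*2 - (u1/3)*2 - (u2/3) + (u3/3)) + ((u0%3)*b0 - (u1%3)*b1 - (u2%3)*b2 + (u3%3)*b3)) + 9*((u0/3)*b0 - (u1/3)*b1 - (u2/3)*b2 + (u3/3)*b3) = -1 := by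
      linear_combination hM0u
    have hN1u : ((u0%3)*2 + (u1%3)*2 + (u1%3)*2 - (u2%3) - (u3%3) - (u3%3)) + 3*(((u0/3)*2 + (u1/3)*2 + (u1/3)*2 - (u2/3) - (u3/3) - (u3/3)) + ((u0%3)*b1 + (u1%3)*b0 + (u1%3)*b1 - (u2%3)*b3 - (u3%3)*b2 - (u3%3)*b3)) + 9*((u0/3)*b1 + (u1/3)*b0 + (u1/3)*b1 - (u2/3)*b3 - (u3/3)*b2 - (u3/3)*b3) = -1 := by
      linear_combination hM1u
    have hN2u : ((u0%3) + (u2%3)*2 - (u1%3) - (u3%3)*2 + 8*(u2%3) - 8*(u3%3)) + 3*(((u0/3) + (u2/3)*2 - (u1/3) - (u3/3)*2 + 8*(u2/3) - 8*(u3/3)) + ((u0%3)*b2 + (u2%3)*b0 - (u1%3)*b3 - (u3%3)*b1 + 8*(u2%3)*b2 - 8*(u3%3)*b3)) + 9*((u0/3)*b2 + (u2/3)*b0 - (u1/3)*b3 - (u3/3)*b1 + 8*(u2/3)*b2 - 8*(u3/3)*b3) = 1 := by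
      linear_combination hM2u
    have hN3u : ((u0%3) + (u3%3)*2 + (u1%3) + (u2%3)*2 + (u1%3) + (u3%3)*2 + 8*(u2%3) + 8*(u3%3) + 8*(u3%3)) + 3*(((u0/3) + (u3/3)*2 + (u1/3) + (u2/3)*2 + (u1/3) + (u3/3)*2 + 8*(u2/3) + 8*(u3/3) + 8*(u3/3)) + ((u0%3)*b3 + (u3%3)*b0 + (u1%3)*b2 + (u2%3)*b1 + (u1%3)*b3 + (u3%3)*b1 + 8*(u2%3)*b3 + 8*(u3%3)*b2 + 8*(u3%3)*b3)) + 9*((u0/3)*b3 + (u3/3)*b0 + (u1/3)*b2 + (u2/3)*b1 + (u1/3)*b3 + (u3/3)*b1 + 8*(u2/3)*b3 + 8*(u3/3)*b2 + 8*(u3/3)*b3) = -2 := by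
      linear_combination hM3u
    obtain ⟨tu, ht0u, ht1u, ht2u, ht3u⟩ := DWp ((u0/3 : ℤ) : ZMod 3) ((u1/3 : ℤ) : ZMod 3) ((u2/3 : ℤ) : ZMod 3) ((u3/3 : ℤ) : ZMod 3)
    have hk0u := red9 _ _ _ _ hN0u
    push_cast at hk0u
    rw [glueA u0, glueA u1, glueA u2, glueA u3, glueC u0, glueC u1, glueC u2, glueC u3, ht0u] at hk0u
    have hk1u := red9 _ _ _ _ hN1u
    push_cast at hk1u
    rw [glueA u0, glueA u1, glueA u2, glueA u3, glueC u0, glueC u1, glueC u2, glueC u3, ht1u] at hk1u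
    have hk2u := red9 _ _ _ _ hN2u
    push_cast at hk2u
    rw [glueA u0, glueA u1, glueA u2, glueA u3, glueC u0, glueC u1, glueC u2, glueC u3, ht2u] at hk2u
    have hk3u := red9 _ _ _ _ hN3u
    push_cast at hk3u
    rw [glueA u0, glueA u1, glueA u2, glueA u3, glueC u0, glueC u1, glueC u2, glueC u3, ht3u] at hk3u
    have hN0v : ((v0%3)*2 - (v1%3)*2 - (v2%3) + (v3%3)) + 3*(((v0/3)*2 - (v1/3)*2 - (v2/3) + (v3/3)) + ((v0%3)*b0 - (v1%3)*b1 - (v2%3)*b2 + (v3%3)*b3)) + 9*((v0/3)*b0 - (v1/3)*b1 - (v2/3)*b2 + (v3/3)*b3) = -2 := by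
      linear_combination hM0v
    have hN1v : ((v0%3)*2 + (v1%3)*2 + (v1%3)*2 - (v2%3) - (v3%3) - (v3%3)) + 3*(((v0/3)*2 + (v1/3)*2 + (v1/3)*2 - (v2/3) - (v3/3) - (v3/3)) + ((v0%3)*b1 + (v1%3)*b0 + (v1%3)*b1 - (v2%3)*b3 - (v3%3)*b2 - (v3%3)*b3)) + 9*((v0/3)*b1 + (v1/3)*b0 + (v1/3)*b1 - (v2/3)*b3 - (v3/3)*b2 - (v3/3)*b3) = 1 := by
      linear_combination hM1v
    have hN2v : ((v0%3) + (v2%3)*2 - (v1%3) - (v3%3)*2 + 8*(v2%3) - 8*(v3%3)) + 3*(((v0/3) + (v2/3)*2 - (v1/3) - (v3/3)*2 + 8*(v2/3) - 8*(v3/3)) + ((v0%3)*b2 + (v2%3)*b0 - (v1%3)*b3 - (v3%3)*b1 + 8*(v2%3)*b2 - 8*(v3%3)*b3)) + 9*((v0/3)*b2 + (v2/3)*b0 - (v1/3)*b3 - (v3/3)*b1 + 8*(v2/3)*b2 - 8*(v3/3)*b3) = 2 := by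
      linear_combination hM2v
    have hN3v : ((v0%3) + (v3%3)*2 + (v1%3) + (v2%3)*2 + (v1%3) + (v3%3)*2 + 8*(v2%3) + 8*(v3%3) + 8*(v3%3)) + 3*(((v0/3) + (v3/3)*2 + (v1/3) + (v2/3)*2 + (v1/3) + (v3/3)*2 + 8*(v2/3) + 8*(v3/3) + 8*(v3/3)) + ((v0%3)*b3 + (v3%3)*b0 + (v1%3)*b2 + (v2%3)*b1 + (v1%3)*b3 + (v3%3)*b1 + 8*(v2%3)*b3 + 8*(v3%3)*b2 + 8*(v3%3)*b3)) + 9*((v0/3)*b3 + (v3/3)*b0 + (v1/3)*b2 + (v2/3)*b1 + (v1/3)*b3 + (v3/3)*b1 + 8*(v2/3)*b3 + 8*(v3/3)*b2 + 8*(v3/3)*b3) = 2 := by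
      linear_combination hM3v
    obtain ⟨tv, ht0v, ht1v, ht2v, ht3v⟩ := DWp ((v0/3 : ℤ) : ZMod 3) ((v1/3 : ℤ) : ZMod 3) ((v2/3 : ℤ) : ZMod 3) ((v3/3 : ℤ) : ZMod 3)
    have hk0v := red9 _ _ _ _ hN0v
    push_cast at hk0v
    rw [glueA v0, glueA v1, glueA v2, glueA v3, glueC v0, glueC v1, glueC v2, glueC v3, ht0v] at hk0v
    have hk1v := red9 _ _ _ _ hN1v
    push_cast at hk1v
    rw [glueA v0, glueA v1, glueA v2, glueA v3, glueC v0, glueC v1, glueC v2, glueC v3, ht1v] at hk1v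
    have hk2v := red9 _ _ _ _ hN2v
    push_cast at hk2v
    rw [glueA v0, glueA v1, glueA v2, glueA v3, glueC v0, glueC v1, glueC v2, glueC v3, ht2v] at hk2v
    have hk3v := red9 _ _ _ _ hN3v
    push_cast at hk3v
    rw [glueA v0, glueA v1, glueA v2, glueA v3, glueC v0, glueC v1, glueC v2, glueC v3, ht3v] at hk3v
    exact DBp _ _ _ _
      (DAp _ _ _ _ hkps _ _ _ _ _ hk0u hk1u hk2u hk3u)
      _ _ _ _ _ hk0v hk1v hk2v hk3v
  ·

    have hd0 : (3:ℤ) ∣ a0 - 1 := by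
      apply (ZMod.intCast_zmod_eq_zero_iff_dvd _ 3).mp
      push_cast
      rw [he0]
      decide
    obtain ⟨b0, hb0⟩ := hd0
    have ha0' : a0 = 1 + 3*b0 := by omega
    have hd1 : (3:ℤ) ∣ a1 - 1 := by
      apply (ZMod.intCast_zmod_eq_zero_iff_dvd _ 3).mp
      push_cast
      rw [he1]
      decide
    obtain ⟨b1, hb1⟩ := hd1
    have ha1' : a1 = 1 + 3*b1 := by omega
    have hd2 : (3:ℤ) ∣ a2 - 2 := by
      apply (ZMod.intCast_zmod_eq_zero_iff_dvd _ 3).mp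
      push_cast
      rw [he2]
      decide
    obtain ⟨b2, hb2⟩ := hd2
    have ha2' : a2 = 2 + 3*b2 := by omega
    have hd3 : (3:ℤ) ∣ a3 - 2 := by
      apply (ZMod.intCast_zmod_eq_zero_iff_dvd _ 3).mp
      push_cast
      rw [he3]
      decide
    obtain ⟨b3, hb3⟩ := hd3
    have ha3' : a3 = 2 + 3*b3 := by omega
    rw [ha0', ha1', ha2', ha3'] at hM0u hM1u hM2u hM3u hM0v hM1v hM2v hM3v hps3
    have hu0d : u0 = 3*(u0/3) + u0%3 := by omega
    have hu1d : u1 = 3*(u1/3) + u1%3 := by omega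
    have hu2d : u2 = 3*(u2/3) + u2%3 := by omega
    have hu3d : u3 = 3*(u3/3) + u3%3 := by omega
    rw [hu0d, hu1d, hu2d, hu3d] at hM0u hM1u hM2u hM3u
    have hv0d : v0 = 3*(v0/3) + v0%3 := by omega
    have hv1d : v1 = 3*(v1/3) + v1%3 := by omega
    have hv2d : v2 = 3*(v2/3) + v2%3 := by omega
    have hv3d : v3 = 3*(v3/3) + v3%3 := by omega
    rw [hv0d, hv1d, hv2d, hv3d] at hM0v hM1v hM2v hM3v
    have hNps : (-3 : ℤ) + 3*(-b0 - 2*b1 - b2 + b3) + 9*(-(-3*x2 - 3*x3 + y1 + y2 + 6*y3)) = 0 := by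
      linear_combination hps3
    have hkps := red9 _ _ _ _ hNps
    push_cast at hkps
    have hN0u : ((u0%3) - (u1%3) - (u2%3)*2 + (u3%3)*2) + 3*(((u0/3) - (u1/3) - (u2/3)*2 + (u3/3)*2) + ((u0%3)*b0 - (u1%3)*b1 - (u2%3)*b2 + (u3%3)*b3)) + 9*((u0/3)*b0 - (u1/3)*b1 - (u2/3)*b2 + (u3/3)*b3) = -1 := by
      linear_combination hM0u
    have hN1u : ((u0%3) + (u1%3) + (u1%3) - (u2%3)*2 - (u3%3)*2 - (u3%3)*2) + 3*(((u0/3) + (u1/3) + (u1/3) - (u2/3)*2 - (u3/3)*2 - (u3/3)*2) + ((u0%3)*b1 + (u1%3)*b0 + (u1%3)*b1 - (u2%3)*b3 - (u3%3)*b2 - (u3%3)*b3)) + 9*((u0/3)*b1 + (u1/3)*b0 + (u1/3)*b1 - (u2/3)*b3 - (u3/3)*b2 - (u3/3)*b3) = -1 := by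
      linear_combination hM1u
    have hN2u : ((u0%3)*2 + (u2%3) - (u1%3)*2 - (u3%3) + 16*(u2%3) - 16*(u3%3)) + 3*(((u0/3)*2 + (u2/3) - (u1/3)*2 - (u3/3) + 16*(u2/3) - 16*(u3/3)) + ((u0%3)*b2 + (u2%3)*b0 - (u1%3)*b3 - (u3%3)*b1 + 8*(u2%3)*b2 - 8*(u3%3)*b3)) + 9*((u0/3)*b2 + (u2/3)*b0 - (u1/3)*b3 - (u3/3)*b1 + 8*(u2/3)*b2 - 8*(u3/3)*b3) = 1 := by
      linear_combination hM2u
    have hN3u : ((u0%3)*2 + (u3%3) + (u1%3)*2 + (u2%3) + (u1%3)*2 + (u3%3) + 16*(u2%3) + 16*(u3%3) + 16*(u3%3)) + 3*(((u0/3)*2 + (u3/3) + (u1/3)*2 + (u2/3) + (u1/3)*2 + (u3/3) + 16*(u2/3) + 16*(u3/3) + 16*(u3/3)) + ((u0%3)*b3 + (u3%3)*b0 + (u1%3)*b2 + (u2%3)*b1 + (u1%3)*b3 + (u3%3)*b1 + 8*(u2%3)*b3 + 8*(u3%3)*b2 + 8*(u3%3)*b3)) + 9*((u0/3)*b3 +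 (u3/3)*b0 + (u1/3)*b2 + (u2/3)*b1 + (u1/3)*b3 + (u3/3)*b1 + 8*(u2/3)*b3 + 8*(u3/3)*b2 + 8*(u3/3)*b3) = -2 := by
      linear_combination hM3u
    obtain ⟨tu, ht0u, ht1u, ht2u, ht3u⟩ := DWm ((u0/3 : ℤ) : ZMod 3) ((u1/3 : ℤ) : ZMod 3) ((u2/3 : ℤ) : ZMod 3) ((u3/3 : ℤ) : ZMod 3)
    have hk0u := red9 _ _ _ _ hN0u
    push_cast at hk0u
    rw [glueA u0, glueA u1, glueA u2, glueA u3, glueC u0, glueC u1, glueC u2, glueC u3, ht0u] at hk0u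
    have hk1u := red9 _ _ _ _ hN1u
    push_cast at hk1u
    rw [glueA u0, glueA u1, glueA u2, glueA u3, glueC u0, glueC u1, glueC u2, glueC u3, ht1u] at hk1u
    have hk2u := red9 _ _ _ _ hN2u
    push_cast at hk2u
    rw [glueA u0, glueA u1, glueA u2, glueA u3, glueC u0, glueC u1, glueC u2, glueC u3, ht2u] at hk2u
    have hk3u := red9 _ _ _ _ hN3u
    push_cast at hk3u
    rw [glueA u0, glueA u1, glueA u2, glueA u3, glueC u0, glueC u1, glueC u2, glueC u3, ht3u] at hk3u
    have hN0v : ((v0%3) - (v1%3) - (v2%3)*2 + (v3%3)*2) + 3*(((v0/3) - (v1/3) - (v2/3)*2 + (v3/3)*2) + ((v0%3)*b0 - (v1%3)*b1 - (v2%3)*b2 + (v3%3)*b3)) + 9*((v0/3)*b0 - (v1/3)*b1 - (v2/3)*b2 + (v3/3)*b3) = -2 := by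
      linear_combination hM0v
    have hN1v : ((v0%3) + (v1%3) + (v1%3) - (v2%3)*2 - (v3%3)*2 - (v3%3)*2) + 3*(((v0/3) + (v1/3) + (v1/3) - (v2/3)*2 - (v3/3)*2 - (v3/3)*2) + ((v0%3)*b1 + (v1%3)*b0 + (v1%3)*b1 - (v2%3)*b3 - (v3%3)*b2 - (v3%3)*b3)) + 9*((v0/3)*b1 + (v1/3)*b0 + (v1/3)*b1 - (v2/3)*b3 - (v3/3)*b2 - (v3/3)*b3) = 1 := by
      linear_combination hM1v
    have hN2v : ((v0%3)*2 + (v2%3) - (v1%3)*2 - (v3%3) + 16*(v2%3) - 16*(v3%3)) + 3*(((v0/3)*2 + (v2/3) - (v1/3)*2 - (v3/3) + 16*(v2/3) - 16*(v3/3)) + ((v0%3)*b2 + (v2%3)*b0 - (v1%3)*b3 - (v3%3)*b1 + 8*(v2%3)*b2 - 8*(v3%3)*b3)) + 9*((v0/3)*b2 + (v2/3)*b0 - (v1/3)*b3 - (v3/3)*b1 + 8*(v2/3)*b2 - 8*(v3/3)*b3) = 2 := by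
      linear_combination hM2v
    have hN3v : ((v0%3)*2 + (v3%3) + (v1%3)*2 + (v2%3) + (v1%3)*2 + (v3%3) + 16*(v2%3) + 16*(v3%3) + 16*(v3%3)) + 3*(((v0/3)*2 + (v3/3) + (v1/3)*2 + (v2/3) + (v1/3)*2 + (v3/3) + 16*(v2/3) + 16*(v3/3) + 16*(v3/3)) + ((v0%3)*b3 + (v3%3)*b0 + (v1%3)*b2 + (v2%3)*b1 + (v1%3)*b3 + (v3%3)*b1 + 8*(v2%3)*b3 + 8*(v3%3)*b2 + 8*(v3%3)*b3)) + 9*((v0/3)*b3 + (v3/3)*b0 + (v1/3)*b2 + (v2/3)*b1 + (v1/3)*b3 + (v3/3)*b1 + 8*(v2/3)*b3 + 8*(v3/3)*b2 + 8*(v3/3)*b3) = 2 := by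
      linear_combination hM3v
    obtain ⟨tv, ht0v, ht1v, ht2v, ht3v⟩ := DWm ((v0/3 : ℤ) : ZMod 3) ((v1/3 : ℤ) : ZMod 3) ((v2/3 : ℤ) : ZMod 3) ((v3/3 : ℤ) : ZMod 3)
    have hk0v := red9 _ _ _ _ hN0v
    push_cast at hk0v
    rw [glueA v0, glueA v1, glueA v2, glueA v3, glueC v0, glueC v1, glueC v2, glueC v3, ht0v] at hk0v
    have hk1v := red9 _ _ _ _ hN1v
    push_cast at hk1v
    rw [glueA v0, glueA v1, glueA v2, glueA v3, glueC v0, glueC v1, glueC v2, glueC v3, ht1v] at hk1v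
    have hk2v := red9 _ _ _ _ hN2v
    push_cast at hk2v
    rw [glueA v0, glueA v1, glueA v2, glueA v3, glueC v0, glueC v1, glueC v2, glueC v3, ht2v] at hk2v
    have hk3v := red9 _ _ _ _ hN3v
    push_cast at hk3v
    rw [glueA v0, glueA v1, glueA v2, glueA v3, glueC v0, glueC v1, glueC v2, glueC v3, ht3v] at hk3v
    exact DBm _ _ _ _
      (DAm _ _ _ _ hkps _ _ _ _ _ hk0u hk1u hk2u hk3u)
      _ _ _ _ _ hk0v hk1v hk2v hk3v
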